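/- arXiv:1011.4480 — 5 statements merged into one kernel-verified Lean document; each statement's English description precedes it below -/
import Mathlib

section
/- Let T be a compact operator on a Banach space V and λ a nonzero scalar. If λI − T is injective, then λI − T is surjective. -/
open Function Metric Set

section Aux

variable {𝕜 V : Type*} [RCLike 𝕜] [NormedAddCommGroup V] [NormedSpace 𝕜 V] [CompleteSpace V]

/-- Bounded below: an injective `id - K` with `K` compact is bounded below. -/
lemma aux_bounded_below (K : V →L[𝕜] V) (hK : IsCompactOperator K)
    (hinj : Function.Injective (ContinuousLinearMap.id 𝕜 V - K)) :
    ∃ c > (0:ℝ), ∀ x : V, c * ‖x‖ ≤ ‖(ContinuousLinearMap.id 𝕜 V - K) x‖ := by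
  set S := ContinuousLinearMap.id 𝕜 V - K with hS
  by_contra h
  push_neg at h
  -- for each n, a unit vector y n with ‖S (y n)‖ small
  have hy : ∀ n : ℕ, ∃ y : V, ‖y‖ = 1 ∧ ‖S y‖ < 1 / (n + 1) := by
    intro n
    obtain ⟨x, hx⟩ := h (1 / (n + 1)) (by positivity)
    have hx0 : x ≠ 0 := by
      rintro rfl
      simp at hx
    refine ⟨(RCLike.ofReal ‖x‖ : 𝕜)⁻¹ • x, ?_, ?_⟩
    · rw [norm_smul, norm_inv, RCLike.norm_ofReal, abs_of_nonneg (norm_nonneg x),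
        inv_mul_cancel₀ (norm_ne_zero_iff.2 hx0)]

    · rw [map_smul, norm_smul, norm_inv, RCLike.norm_ofReal,
        abs_of_nonneg (norm_nonneg x)]
      rw [inv_mul_lt_iff₀ (norm_pos_iff.2 hx0)]
      calc ‖S x‖ < 1 / (n+1) * ‖x‖ := hx
        _ = ‖x‖ * (1/(n+1)) := by ring
  choose y hy1 hy2 using hy
  obtain ⟨C, hC, hCsub⟩ := hK.image_closedBall_subset_compact 1
  have hmem : ∀ n, K (y n) ∈ C := fun n => hCsub ⟨y n, by simp [hy1 n], rfl⟩
  obtain ⟨a, -, φ, hφ, ha⟩ := hC.isSeqCompact hmem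
  have hS0 : Filter.Tendsto (fun n => S (y (φ n))) Filter.atTop (nhds 0) := by
    rw [tendsto_iff_norm_sub_tendsto_zero]
    have h1 : Filter.Tendsto (fun n : ℕ => 1 / ((φ n : ℝ) + 1)) Filter.atTop (nhds 0) := by
      apply Filter.Tendsto.comp (g := fun m : ℕ => 1 / ((m : ℝ) + 1))
        tendsto_one_div_add_atTop_nhds_zero_nat hφ.tendsto_atTop
    refine squeeze_zero (fun n => by positivity) (fun n => ?_) h1
    simpa using (hy2 (φ n)).le
  have hyt : Filter.Tendsto (fun n => y (φ n)) Filter.atTop (nhds a) := by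
    have hfun : (fun n => y (φ n)) = fun n => S (y (φ n)) + K (y (φ n)) := by
      funext n; simp [hS]
    rw [hfun]
    simpa using Filter.Tendsto.add hS0 ha
  have hna : ‖a‖ = 1 := by
    have := (continuous_norm.tendsto a).comp hyt
    have h2 : Filter.Tendsto (fun n => ‖y (φ n)‖) Filter.atTop (nhds 1) := by
      simpa [hy1] using Filter.tendsto_const_nhds (x := (1:ℝ)) (f := Filter.atTop (α := ℕ))
    exact tendsto_nhds_unique this h2
  have hSa : S a = 0 := by
    have := (S.continuous.tendsto a).comp hyt
    exact tendsto_nhds_unique this hS0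
  have : a = 0 := hinj (by simpa using hSa)
  rw [this] at hna
  simp at hna

/-- Image of a closed submodule under a bounded-below operator is closed. -/
lemma aux_image_closed (S : V →L[𝕜] V) {c : ℝ} (hc : 0 < c)
    (hb : ∀ x : V, c * ‖x‖ ≤ ‖S x‖) (W : Submodule 𝕜 V) (hW : IsClosed (W : Set V)) :
    IsClosed (S '' (W : Set V)) := by
  haveI : CompleteSpace W := hW.completeSpace_coe
  set f : W →L[𝕜] V := S.comp W.subtypeL with hf
  have hanti : AntilipschitzWith c.toNNReal⁻¹ f := by
    apply AddMonoidHomClass.antilipschitz_of_bound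
    intro x
    have := hb (x : V)
    rw [NNReal.coe_inv, Real.coe_toNNReal _ hc.le]
    rw [← Submodule.norm_coe x]
    rw [le_inv_mul_iff₀ hc]
    simpa [hf] using this
  have hcl : IsClosed (Set.range f) := hanti.isClosed_range f.uniformContinuous
  have : Set.range f = S '' (W : Set V) := by
    ext v
    constructor
    · rintro ⟨x, rfl⟩; exact ⟨x, x.2, rfl⟩
    · rintro ⟨x, hx, rfl⟩; exact ⟨⟨x, hx⟩, rfl⟩
  rwa [this] at hcl

/-- Key lemma: `id - K` injective implies surjective, for `K` compact. -/
lemma aux_key (K : V →L[𝕜] V) (hK : IsCompactOperator K)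
    (hinj : Function.Injective (ContinuousLinearMap.id 𝕜 V - K)) :
    Function.Surjective (ContinuousLinearMap.id 𝕜 V - K) := by
  set S := ContinuousLinearMap.id 𝕜 V - K with hSdef
  by_contra hsurj
  rw [← Set.range_eq_univ, ← ne_eq, Set.ne_univ_iff_exists_notMem] at hsurj
  obtain ⟨u, hu⟩ := hsurj
  obtain ⟨c, hc, hb⟩ := aux_bounded_below K hK hinj
  -- powers of S are injective
  have hinjn : ∀ n : ℕ, Function.Injective (⇑(S ^ n)) := by
    intro n
    induction n with
    | zero => simpa using Function.injective_id
    | succ n ih =>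
      rw [pow_succ]
      intro x y hxy
      simp only [ContinuousLinearMap.mul_apply] at hxy
      exact hinj (ih hxy)
  -- the decreasing chain of ranges
  set W : ℕ → Submodule 𝕜 V := fun n => LinearMap.range ((S ^ n : V →L[𝕜] V) : V →ₗ[𝕜] V)
    with hWdef
  have hWmem : ∀ n x, x ∈ W n ↔ ∃ y, (S ^ n) y = x := by
    intro n x; rfl
  have hWsucc : ∀ n, (W (n+1) : Set V) = S '' (W n : Set V) := by
    intro n
    ext x
    simp only [SetLike.mem_coe, hWmem, Set.mem_image]
    constructor
    · rintro ⟨y, rfl⟩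
      exact ⟨(S ^ n) y, ⟨y, rfl⟩, by rw [pow_succ']; rfl⟩
    · rintro ⟨z, ⟨y, rfl⟩, rfl⟩
      exact ⟨y, by rw [pow_succ']; rfl⟩
  have hWclosed : ∀ n, IsClosed (W n : Set V) := by
    intro n
    induction n with
    | zero =>
      have : (W 0 : Set V) = Set.univ := by
        ext x; simp [hWmem]
      rw [this]; exact isClosed_univ
    | succ n ih =>
      rw [hWsucc n]
      exact aux_image_closed S hc hb (W n) ih
  have hWanti : ∀ m n : ℕ, n ≤ m → W m ≤ W n := by
    have hstep : ∀ n, W (n+1) ≤ W n := by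
      intro n x hx
      obtain ⟨y, rfl⟩ := (hWmem _ _).1 hx
      rw [pow_succ]
      exact ⟨S y, rfl⟩
    intro m n h
    induction h with
    | refl => exact le_refl _
    | step h ih => exact le_trans (hstep _) (by assumption)
  -- S maps W n into W (n+1)
  have hSmap : ∀ n x, x ∈ W n → S x ∈ W (n+1) := by
    intro n x hx
    obtain ⟨y, rfl⟩ := (hWmem _ _).1 hx
    refine ⟨y, ?_⟩
    rw [pow_succ']; rfl
  -- S^n u witnesses strictness
  have hstrict : ∀ n, (S ^ n) u ∈ W n ∧ (S ^ n) u ∉ W (n+1) := by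
    intro n
    refine ⟨⟨u, rfl⟩, ?_⟩
    rintro ⟨y, hy⟩
    rw [pow_succ] at hy
    simp only [ContinuousLinearMap.coe_coe, ContinuousLinearMap.mul_apply] at hy
    exact hu ⟨y, hinjn n hy⟩
  -- Riesz sequence
  have hz : ∀ n : ℕ, ∃ z : V, z ∈ W n ∧ ‖z‖ = 1 ∧ ∀ v ∈ W (n+1), (1:ℝ)/2 ≤ ‖z - v‖ := by
    intro n
    set F : Submodule 𝕜 (W n) := (W (n+1)).comap (W n).subtype with hF
    have hFc : IsClosed (F : Set (W n)) := by
      have : (F : Set (W n)) = ((W n).subtype) ⁻¹' (W (n+1) : Set V) := rfl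
      rw [this]
      exact (hWclosed (n+1)).preimage continuous_subtype_val
    have hFne : ∃ x : W n, x ∉ F := by
      obtain ⟨h1, h2⟩ := hstrict n
      exact ⟨⟨(S ^ n) u, h1⟩, h2⟩
    obtain ⟨x₀, hx₀F, hbound⟩ := riesz_lemma hFc hFne (show (1:ℝ)/2 < 1 by norm_num)
    have hx₀0 : (x₀ : V) ≠ 0 := by
      intro h
      apply hx₀F
      have : x₀ = 0 := Subtype.ext h
      rw [this]; exact F.zero_mem
    set d : 𝕜 := (RCLike.ofReal ‖(x₀ : V)‖ : 𝕜) with hd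
    have hd0 : d ≠ 0 := by
      simp [hd, norm_eq_zero, hx₀0]
    refine ⟨d⁻¹ • (x₀ : V), ?_, ?_, ?_⟩
    · exact (W n).smul_mem _ x₀.2
    · rw [norm_smul, norm_inv, hd, RCLike.norm_ofReal, abs_of_nonneg (norm_nonneg _),
        inv_mul_cancel₀ (norm_ne_zero_iff.2 hx₀0)]
    · intro v hv
      have hvWn : v ∈ W n := hWanti (n+1) n (by omega) hv
      have hdv : d • v ∈ W (n+1) := (W (n+1)).smul_mem _ hv
      have hyF : (⟨d • v, (W n).smul_mem _ hvWn⟩ : W n) ∈ F := hdv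
      have := hbound _ hyF
      have hnorm : ‖x₀ - (⟨d • v, (W n).smul_mem _ hvWn⟩ : W n)‖ = ‖(x₀ : V) - d • v‖ := rfl
      rw [hnorm] at this
      have heq : d⁻¹ • (x₀ : V) - v = d⁻¹ • ((x₀ : V) - d • v) := by
        rw [smul_sub, smul_smul, inv_mul_cancel₀ hd0, one_smul]
      rw [heq, norm_smul, norm_inv, hd, RCLike.norm_ofReal, abs_of_nonneg (norm_nonneg _)]
      rw [le_inv_mul_iff₀ (norm_pos_iff.2 hx₀0)]
      calc ‖(x₀:V)‖ * (1/2) = 1/2 * ‖(x₀:V)‖ := by ring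
        _ ≤ ‖(x₀ : V) - d • v‖ := this
  choose z hz1 hz2 hz3 using hz
  -- separation of K values
  have hsep : ∀ n m : ℕ, n < m → (1:ℝ)/2 ≤ ‖K (z n) - K (z m)‖ := by
    intro n m hnm
    have hKz : ∀ k, K (z k) = z k - S (z k) := by
      intro k
      simp [hSdef]
    have hv : S (z n) + z m - S (z m) ∈ W (n+1) := by
      apply Submodule.sub_mem
      · exact Submodule.add_mem _ (hSmap n _ (hz1 n)) (hWanti m (n+1) (by omega) (hz1 m))
      · exact hWanti (m+1) (n+1) (by omega) (hSmap m _ (hz1 m))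
    have heq : K (z n) - K (z m) = z n - (S (z n) + z m - S (z m)) := by
      rw [hKz, hKz]; abel
    rw [heq]
    exact hz3 n _ hv
  -- compactness contradiction
  obtain ⟨C, hC, hCsub⟩ := hK.image_closedBall_subset_compact 1
  have hmem : ∀ n, K (z n) ∈ C := fun n => hCsub ⟨z n, by simp [hz2 n], rfl⟩
  obtain ⟨a, -, φ, hφ, ha⟩ := hC.isSeqCompact hmem
  have hcauchy : CauchySeq (fun n => K (z (φ n))) := ha.cauchySeq
  rw [Metric.cauchySeq_iff'] at hcauchy
  obtain ⟨N, hN⟩ := hcauchy (1/2) (by norm_num)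
  have h1 := hN (N+1) (by omega)
  rw [dist_eq_norm] at h1
  have h2 := hsep (φ N) (φ (N+1)) (hφ (by omega))
  rw [norm_sub_rev] at h1
  linarith

end Aux

theorem compact_injective_imp_surjective {𝕜 V : Type*} [RCLike 𝕜] [NormedAddCommGroup V]
    [NormedSpace 𝕜 V] [CompleteSpace V] (T : V →L[𝕜] V) (hT : IsCompactOperator T)
    (lam : 𝕜) (hlam : lam ≠ 0)
    (hinj : Function.Injective (lam • ContinuousLinearMap.id 𝕜 V - T)) :
    Function.Surjective (lam • ContinuousLinearMap.id 𝕜 V - T) := by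
  set K : V →L[𝕜] V := lam⁻¹ • T with hKdef
  have hKc : IsCompactOperator K := by
    have h := hT.smul lam⁻¹
    rw [hKdef]
    exact h
  set S := ContinuousLinearMap.id 𝕜 V - K with hSdef
  have hfac : ∀ x : V, (lam • ContinuousLinearMap.id 𝕜 V - T) x = lam • S x := by
    intro x
    simp only [hSdef, hKdef, ContinuousLinearMap.sub_apply, ContinuousLinearMap.smul_apply,
      ContinuousLinearMap.id_apply, smul_sub, smul_smul, mul_inv_cancel₀ hlam, one_smul]
  have hSinj : Function.Injective S := by
    intro x y hxy
    apply hinj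
    rw [hfac, hfac, hxy]
  have hSsurj := aux_key K hKc hSinj
  intro y
  obtain ⟨x, hx⟩ := hSsurj (lam⁻¹ • y)
  refine ⟨x, ?_⟩
  rw [hfac, hx, smul_smul, mul_inv_cancel₀ hlam, one_smul]
end

section
/- Let T be a compact operator on a Banach space V and λ a nonzero scalar. If λI − T is surjective, then λI − T is injective. -/
/-!
If `S = λ - T` is surjective but kills some `v ≠ 0`, the kernels of the powers `S ^ n` increase
strictly: a preimage of `v` under `S ^ n` lies in `ker S ^ (n + 1)` but not in `ker S ^ n`.
Riesz's lemma then yields unit vectors `y n ∈ ker S ^ (n + 1)` at distance `≥ 1/2` from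
`ker S ^ n`. As `T = λ - S` and `S` lowers the index of the chain, `T y n - T y m` lies in
`λ • (y n - ker S ^ n)` for `m < n`, so the `T y n` are `‖λ‖ / 2`-separated, which the
compactness of `T` forbids.
-/

open Function Set

theorem LinearMap.strictMono_iterateKer_of_surjective {R M : Type*} [Ring R] [AddCommGroup M]
    [Module R M] {f : M →ₗ[R] M} (hsurj : Surjective f) (hinj : ¬ Injective f) :
    StrictMono f.iterateKer := by
  obtain ⟨x, hx, hx0⟩ := Submodule.exists_mem_ne_zero_of_ne_bot (mt LinearMap.ker_eq_bot.mp hinj)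
  refine strictMono_nat_of_lt_succ fun n ↦ SetLike.lt_iff_le_and_exists.mpr
    ⟨f.iterateKer.monotone n.le_succ, ?_⟩
  obtain ⟨z, hz⟩ : ∃ z, (f ^ n) z = x := by
    rw [Module.End.coe_pow]
    exact (hsurj.iterate n) x
  refine ⟨z, ?_, ?_⟩
  · simpa [pow_succ', hz] using hx
  · simpa [hz] using hx0

theorem riesz_lemma_of_lt_one_of_lt {𝕜 E : Type*} [RCLike 𝕜] [NormedAddCommGroup E]
    [NormedSpace 𝕜 E] {F G : Submodule 𝕜 E} (hFc : IsClosed (F : Set E)) (hFG : F < G)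
    {r : ℝ} (hr : r < 1) : ∃ y ∈ G, ‖y‖ = 1 ∧ ∀ w ∈ F, r ≤ ‖y - w‖ := by
  let F' : Submodule 𝕜 G := F.comap G.subtype
  obtain ⟨x, hxG, hxF⟩ := SetLike.exists_of_lt hFG
  obtain ⟨y, -, hy, hfar⟩ := riesz_lemma_of_lt_one (F := F')
    (hFc.preimage continuous_subtype_val) ⟨⟨x, hxG⟩, hxF⟩ hr
  exact ⟨y, y.2, hy, fun w hw ↦ hfar ⟨w, hFG.le hw⟩ hw⟩

theorem IsCompact.exists_lt_dist_lt {X : Type*} [PseudoMetricSpace X] {s : Set X}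
    (hs : IsCompact s) {u : ℕ → X} (hu : ∀ n, u n ∈ s) {ε : ℝ} (hε : 0 < ε) :
    ∃ m n, m < n ∧ dist (u m) (u n) < ε := by
  obtain ⟨_, -, φ, hφ, hlim⟩ := hs.tendsto_subseq hu
  obtain ⟨N, hN⟩ := Metric.cauchySeq_iff'.mp hlim.cauchySeq ε hε
  exact ⟨φ N, φ (N + 1), hφ N.lt_succ_self, by simpa [dist_comm] using hN (N + 1) N.le_succ⟩

theorem IsCompactOperator.not_strictMono_of_mapsTo {𝕜 V : Type*} [RCLike 𝕜]
    [NormedAddCommGroup V] [NormedSpace 𝕜 V] {T : V →L[𝕜] V} (hT : IsCompactOperator T)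
    {lam : 𝕜} (hlam : lam ≠ 0) {N : ℕ → Submodule 𝕜 V} (hclosed : ∀ n, IsClosed (N n : Set V))
    (hmaps : ∀ n, MapsTo (lam • ContinuousLinearMap.id 𝕜 V - T) (N (n + 1)) (N n)) :
    ¬ StrictMono N := by
  intro hN
  set S := lam • ContinuousLinearMap.id 𝕜 V - T
  choose y hyN hy hfar using fun n ↦
    riesz_lemma_of_lt_one_of_lt (hclosed n) (hN n.lt_succ_self) (r := 2⁻¹) (by norm_num)
  have hsep : ∀ m n, m < n → ‖lam‖ * 2⁻¹ ≤ dist (T (y m)) (T (y n)) := by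
    intro m n hmn
    set w := y m + lam⁻¹ • (S (y n) - S (y m))
    have hw : w ∈ N n := (N n).add_mem (hN.monotone hmn (hyN m)) <| (N n).smul_mem _ <|
      (N n).sub_mem (hmaps n (hyN n)) (hN.monotone hmn.le (hmaps m (hyN m)))
    have hTw : T (y n) - T (y m) = lam • (y n - w) := by
      rw [smul_sub, smul_add, smul_inv_smul₀ hlam]
      simp only [S, sub_apply, smul_apply, ContinuousLinearMap.id_apply]
      abel
    rw [dist_comm, dist_eq_norm, hTw, norm_smul]
    exact mul_le_mul_of_nonneg_left (hfar n w hw) (norm_nonneg _)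
  obtain ⟨K, hK, hTK⟩ := hT.image_closedBall_subset_compact 1
  obtain ⟨m, n, hmn, hdist⟩ := hK.exists_lt_dist_lt (u := fun n ↦ T (y n))
    (fun n ↦ hTK ⟨y n, by simp [hy], rfl⟩) (ε := ‖lam‖ * 2⁻¹) (by positivity)
  exact (hsep m n hmn).not_gt hdist

theorem compact_surjective_imp_injective_general {𝕜 V : Type*} [RCLike 𝕜] [NormedAddCommGroup V]
    [NormedSpace 𝕜 V] (T : V →L[𝕜] V) (hT : IsCompactOperator T)
    (lam : 𝕜) (hlam : lam ≠ 0)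
    (hsurj : Function.Surjective (lam • ContinuousLinearMap.id 𝕜 V - T)) :
    Function.Injective (lam • ContinuousLinearMap.id 𝕜 V - T) := by
  set S := lam • ContinuousLinearMap.id 𝕜 V - T
  by_contra hinj
  refine hT.not_strictMono_of_mapsTo hlam (N := (S : V →ₗ[𝕜] V).iterateKer) (fun n ↦ ?_)
    (fun n x hx ↦ ?_) (LinearMap.strictMono_iterateKer_of_surjective hsurj hinj)
  · rw [LinearMap.iterateKer_coe, ← ContinuousLinearMap.toLinearMap_pow]
    exact (S ^ n).isClosed_ker
  · simpa only [LinearMap.iterateKer_coe, SetLike.mem_coe, LinearMap.mem_ker, pow_succ,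
      Module.End.mul_apply, ContinuousLinearMap.coe_coe] using hx

theorem compact_surjective_imp_injective {𝕜 V : Type*} [RCLike 𝕜] [NormedAddCommGroup V]
    [NormedSpace 𝕜 V] [CompleteSpace V] (T : V →L[𝕜] V) (hT : IsCompactOperator T)
    (lam : 𝕜) (hlam : lam ≠ 0)
    (hsurj : Function.Surjective (lam • ContinuousLinearMap.id 𝕜 V - T)) :
    Function.Injective (lam • ContinuousLinearMap.id 𝕜 V - T) :=
  compact_surjective_imp_injective_general T hT lam hlam hsurj
end

section
/- Let T be a compact operator on a Banach space V and λ ≠ 0. Then the range of λI − T is closed. -/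
/-!
The kernel `N` of `S = λ • id - T` is finite dimensional, since `T` acts on it as `λ • id` and is
compact, so `N` has a closed complement `q` and `S '' q = range S`. On `q` the operator `S` is
bounded below: otherwise there are vectors `uₙ ∈ q` of norm bounded away from `0` and `∞` with
`S uₙ → 0`, and compactness of `T` yields a subsequence converging to a nonzero vector of `q ∩ N`.
A map that is bounded below on a Banach space has closed range.
-/

open Filter Topology

namespace ContinuousLinearMap

variable {𝕜 E F : Type*} [NontriviallyNormedField 𝕜] [NormedAddCommGroup E] [NormedSpace 𝕜 E]
  [NormedAddCommGroup F] [NormedSpace 𝕜 F]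

theorem exists_seq_tendsto_zero_of_not_antilipschitz {f : E →L[𝕜] F}
    (hf : ¬∃ K, AntilipschitzWith K f) :
    ∃ c > 0, ∃ u : ℕ → E, (∀ n, c ≤ ‖u n‖ ∧ ‖u n‖ ≤ 1) ∧ Tendsto (f ∘ u) atTop (𝓝 0) := by
  have hsmall : ∀ ε > 0, ∃ x, ‖f x‖ < ε * ‖x‖ := by
    simpa [antilipschitzWith_iff_exists_mul_le_norm] using hf
  obtain ⟨C, hC⟩ := NormedField.exists_one_lt_norm 𝕜
  have hseq (n : ℕ) : ∃ v : E, ‖C‖⁻¹ ≤ ‖v‖ ∧ ‖v‖ ≤ 1 ∧ ‖f v‖ < 1 / (n + 1) := by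
    obtain ⟨x, hx⟩ := hsmall (1 / (n + 1)) (by positivity)
    have hx0 : x ≠ 0 := by rintro rfl; simp at hx
    obtain ⟨d, -, hd_lt, hd_ge, -⟩ := rescale_to_shell hC one_pos hx0
    refine ⟨d • x, by simpa using hd_ge, hd_lt.le, ?_⟩
    calc ‖f (d • x)‖ = ‖d‖ * ‖f x‖ := by rw [map_smul, norm_smul]
      _ ≤ ‖d‖ * (1 / (n + 1) * ‖x‖) := by gcongr
      _ = 1 / (n + 1) * ‖d • x‖ := by rw [norm_smul]; ring
      _ < 1 / (n + 1) := mul_lt_of_lt_one_right (by positivity) hd_lt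
  choose u hu_ge hu_le hfu using hseq
  exact ⟨‖C‖⁻¹, by positivity, u, fun n ↦ ⟨hu_ge n, hu_le n⟩,
    squeeze_zero_norm (fun n ↦ (hfu n).le) tendsto_one_div_add_atTop_nhds_zero_nat⟩

end ContinuousLinearMap

namespace IsCompactOperator

variable {𝕜 V : Type*} [NontriviallyNormedField 𝕜] [NormedAddCommGroup V] [NormedSpace 𝕜 V]
  {T : V →L[𝕜] V} {μ : 𝕜}

theorem finiteDimensional_ker_smul_id_sub [CompleteSpace 𝕜] (hT : IsCompactOperator T)
    (hμ : μ ≠ 0) : FiniteDimensional 𝕜 (μ • ContinuousLinearMap.id 𝕜 V - T).ker := by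
  set N := (μ • ContinuousLinearMap.id 𝕜 V - T).ker
  have hTN : ∀ v ∈ N, T v = μ • v := fun v hv ↦ (sub_eq_zero.mp hv).symm
  have hTmaps : ∀ v ∈ N, (T : V →ₗ[𝕜] V) v ∈ N := fun v hv ↦ by
    simp only [ContinuousLinearMap.coe_coe, hTN v hv]
    exact N.smul_mem μ hv
  have hid : (id : N → N) = μ⁻¹ • ⇑((T : V →ₗ[𝕜] V).restrict hTmaps) := by
    ext v
    simp [hTN v v.2, smul_smul, inv_mul_cancel₀ hμ]
  apply FiniteDimensional.of_isCompactOperator_id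
  rw [hid]
  exact (hT.restrict hTmaps (ContinuousLinearMap.isClosed_ker _)).smul μ⁻¹

theorem exists_subseq_tendsto_of_tendsto_smul_id_sub (hT : IsCompactOperator T) (hμ : μ ≠ 0)
    {r : ℝ} {u : ℕ → V} (hu : ∀ n, ‖u n‖ ≤ r)
    (hSu : Tendsto ((μ • ContinuousLinearMap.id 𝕜 V - T) ∘ u) atTop (𝓝 0)) :
    ∃ x, (μ • ContinuousLinearMap.id 𝕜 V - T) x = 0 ∧
      ∃ φ : ℕ → ℕ, StrictMono φ ∧ Tendsto (u ∘ φ) atTop (𝓝 x) := by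
  set S := μ • ContinuousLinearMap.id 𝕜 V - T
  obtain ⟨K, hK, hTK⟩ := hT.image_closedBall_subset_compact r
  obtain ⟨y, -, φ, hφ, hTy⟩ := hK.tendsto_subseq (x := T ∘ u)
    fun n ↦ hTK ⟨u n, by simpa using hu n, rfl⟩
  -- `μ • u = S u + T u`, and along `φ` the first term tends to `0` and the second to `y`.
  have hu_lim : Tendsto (u ∘ φ) atTop (𝓝 (μ⁻¹ • y)) := by
    have hμu : Tendsto (fun n ↦ μ • u (φ n)) atTop (𝓝 y) := by
      simpa [S] using (hSu.comp hφ.tendsto_atTop).add hTy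
    simpa [Function.comp_def, smul_smul, inv_mul_cancel₀ hμ] using hμu.const_smul μ⁻¹
  refine ⟨μ⁻¹ • y, tendsto_nhds_unique ?_ (hSu.comp hφ.tendsto_atTop), φ, hφ, hu_lim⟩
  exact (S.continuous.tendsto _).comp hu_lim

theorem exists_antilipschitzWith_smul_id_sub_comp_subtypeL (hT : IsCompactOperator T) (hμ : μ ≠ 0)
    {q : Submodule 𝕜 V} (hq : IsClosed (q : Set V))
    (hdisj : Disjoint q (μ • ContinuousLinearMap.id 𝕜 V - T).ker) :
    ∃ K, AntilipschitzWith K ((μ • ContinuousLinearMap.id 𝕜 V - T).comp q.subtypeL) := by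
  by_contra h
  obtain ⟨c, hc, u, hu, hSu⟩ :=
    ContinuousLinearMap.exists_seq_tendsto_zero_of_not_antilipschitz h
  obtain ⟨x, hSx, φ, hφ, hux⟩ := hT.exists_subseq_tendsto_of_tendsto_smul_id_sub hμ
    (u := fun n ↦ (u n : V)) (fun n ↦ (hu n).2) hSu
  have hxq : x ∈ q := hq.mem_of_tendsto hux (Eventually.of_forall fun n ↦ (u (φ n)).2)
  have hx0 : x = 0 := (Submodule.disjoint_def.mp hdisj) x hxq hSx
  have hc_le : c ≤ ‖x‖ := ge_of_tendsto hux.norm (Eventually.of_forall fun n ↦ (hu (φ n)).1)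
  rw [hx0, norm_zero] at hc_le
  exact hc.not_ge hc_le

end IsCompactOperator

theorem compact_range_closed {𝕜 V : Type*} [RCLike 𝕜] [NormedAddCommGroup V]
    [NormedSpace 𝕜 V] [CompleteSpace V] (T : V →L[𝕜] V) (hT : IsCompactOperator T)
    (lam : 𝕜) (hlam : lam ≠ 0) :
    IsClosed (LinearMap.range ((lam • ContinuousLinearMap.id 𝕜 V - T : V →L[𝕜] V) : V →ₗ[𝕜] V) : Set V) := by
  set S := lam • ContinuousLinearMap.id 𝕜 V - T
  have := hT.finiteDimensional_ker_smul_id_sub hlam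
  obtain ⟨q, hq, hcompl⟩ := (Submodule.ClosedComplemented.of_finiteDimensional S.ker).exists_isClosed_isCompl
  have : CompleteSpace q := hq.completeSpace_coe
  obtain ⟨K, hK⟩ := hT.exists_antilipschitzWith_smul_id_sub_comp_subtypeL hlam hq hcompl.symm.disjoint
  have hrange : LinearMap.range (S : V →ₗ[𝕜] V) = q.map (S : V →ₗ[𝕜] V) :=
    (Submodule.map_eq_range_iff.mpr hcompl.symm.codisjoint).symm
  rw [hrange, Submodule.map_coe, Set.image_eq_range]
  exact hK.isClosed_range (S.comp q.subtypeL).uniformContinuous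
end

section
/- Let A be a compact self-adjoint operator on a Hilbert space H, λ ≠ 0 real, and f ∈ H. Then the equation λu − Au = f has a solution u ∈ H if and only if f is orthogonal to every v ∈ H satisfying Av = λv. -/
/-!
Let `K` be the `λ`-eigenspace of `A`. Since `A` is symmetric, it preserves `Kᗮ`, and its
restriction to `Kᗮ` is a compact operator without eigenvalue `λ`; by the Fredholm alternative
`λ - A` therefore maps `Kᗮ` onto itself. Conversely, `λ` being real, symmetry of `A` makes
the range of `λ - A` orthogonal to `K`.
-/

open scoped InnerProductSpace
open Module End

section

variable {𝕜 E : Type*} [RCLike 𝕜] [NormedAddCommGroup E] [InnerProductSpace 𝕜 E]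

theorem LinearMap.IsSymmetric.range_sub_le_orthogonal_eigenspace {T : E →ₗ[𝕜] E}
    (hT : T.IsSymmetric) (μ : 𝕜) :
    LinearMap.range (μ • 1 - T : E →ₗ[𝕜] E) ≤ (eigenspace T μ)ᗮ := by
  rintro _ ⟨u, rfl⟩
  rw [Submodule.mem_orthogonal]
  intro v hv
  rcases eq_or_ne v 0 with rfl | hv0
  · exact inner_zero_left _
  have hμ : (starRingEnd 𝕜) μ = μ :=
    hT.conj_eigenvalue_eq_self (hasEigenvalue_of_hasEigenvector ⟨hv, hv0⟩)
  rw [mem_eigenspace_iff] at hv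
  simp [inner_sub_right, inner_smul_right, ← hT v u, hv, inner_smul_left, hμ]

theorem IsCompactOperator.orthogonal_eigenspace_le_range_sub [CompleteSpace E] {T : E →L[𝕜] E}
    (hT : IsCompactOperator T) (hsa : IsSelfAdjoint T) {μ : 𝕜} (hμ : μ ≠ 0) :
    (eigenspace (T : End 𝕜 E) μ)ᗮ ≤ (μ • 1 - T).range := by
  intro f hf
  set K := eigenspace (T : End 𝕜 E) μ
  have hinv := hsa.isSymmetric.invariant_orthogonalComplement_eigenspace μ
  set S : Kᗮ →L[𝕜] Kᗮ := T.restrict hinv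
  have hS : IsCompactOperator S := hT.restrict' (f := (T : E →ₗ[𝕜] E)) hinv
  have hS_eig : ¬ HasEigenvalue (S : End 𝕜 Kᗮ) μ :=
    not_not.mpr (eigenspace_restrict_eq_bot hinv K.orthogonal_disjoint)
  have hres : μ ∈ resolventSet 𝕜 S := (hS.hasEigenvalue_or_mem_resolventSet hμ).resolve_left hS_eig
  rw [spectrum.mem_resolventSet_iff, ContinuousLinearMap.isUnit_iff_bijective] at hres
  obtain ⟨x, hx⟩ := hres.surjective ⟨f, hf⟩
  refine ⟨(x : E), ?_⟩
  simpa [S, Algebra.algebraMap_eq_smul_one] using congrArg Subtype.val hx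

theorem IsCompactOperator.range_sub_eq_orthogonal_eigenspace [CompleteSpace E] {T : E →L[𝕜] E}
    (hT : IsCompactOperator T) (hsa : IsSelfAdjoint T) {μ : 𝕜} (hμ : μ ≠ 0) :
    (μ • 1 - T).range = (eigenspace (T : End 𝕜 E) μ)ᗮ :=
  le_antisymm (by simpa using hsa.isSymmetric.range_sub_le_orthogonal_eigenspace μ)
    (hT.orthogonal_eigenspace_le_range_sub hsa hμ)

end

theorem compact_selfAdjoint_solvability {H : Type*} [NormedAddCommGroup H]
    [InnerProductSpace ℂ H] [CompleteSpace H]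
    (A : H →L[ℂ] H) (hA : IsCompactOperator A) (hsa : IsSelfAdjoint A)
    (lam : ℝ) (hlam : lam ≠ 0) (f : H) :
    (∃ u : H, (lam : ℂ) • u - A u = f) ↔
      ∀ v : H, A v = (lam : ℂ) • v → inner ℂ f v = (0 : ℂ) := by
  have hrange := hA.range_sub_eq_orthogonal_eigenspace hsa (Complex.ofReal_ne_zero.mpr hlam)
  calc (∃ u : H, (lam : ℂ) • u - A u = f)
      ↔ f ∈ ((lam : ℂ) • 1 - A).range := by simp
    _ ↔ f ∈ (eigenspace (A : End ℂ H) lam)ᗮ := by rw [hrange]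
    _ ↔ ∀ v : H, A v = (lam : ℂ) • v → inner ℂ f v = (0 : ℂ) := by
      simp only [Submodule.mem_orthogonal', mem_eigenspace_iff, ContinuousLinearMap.coe_coe]
end

section
/- Let T be a compact operator on a Banach space and λ ≠ 0. Then ker(λI − T) = 0 if and only if ran(λI − T) = V. -/
/-!
Injective implies surjective is Mathlib's Fredholm alternative: a nonzero `μ` that is not an
eigenvalue of the compact operator `T` lies in its resolvent set.

For the converse, the kernel of `S = μ • 1 - T` is finite-dimensional, hence complemented, so the
open mapping theorem gives a continuous right inverse `R` of a surjective `S`. From `S R = 1` we get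
`R = μ⁻¹ • 1 + μ⁻¹ • T R`, again a nonzero multiple of the identity plus a compact operator, and `R`
is injective; by the first half `R` is surjective, so `S` is its two-sided inverse.
-/

open Function Module End

namespace ContinuousLinearMap.HasRightInverse

variable {𝕜 E F : Type*} [NontriviallyNormedField 𝕜] [NormedAddCommGroup E] [NormedSpace 𝕜 E]
  [CompleteSpace E] [NormedAddCommGroup F] [NormedSpace 𝕜 F] [CompleteSpace F]

theorem of_surjective_of_closedComplemented_ker {f : E →L[𝕜] F} (hf : Surjective f)
    (hker : f.ker.ClosedComplemented) : f.HasRightInverse := by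
  obtain ⟨M, hM, hcompl⟩ := hker.exists_isClosed_isCompl
  have : CompleteSpace M := hM.completeSpace_coe
  have hinj : (f.comp M.subtypeL).ker = ⊥ := by
    rw [Submodule.eq_bot_iff]
    rintro ⟨x, hxM⟩ hx
    have : x ∈ f.ker ⊓ M := ⟨hx, hxM⟩
    simpa [hcompl.inf_eq_bot] using this
  have hsurj : (f.comp M.subtypeL).range = ⊤ := by
    rw [Submodule.eq_top_iff']
    intro y
    obtain ⟨x, rfl⟩ := hf y
    obtain ⟨k, m, hk, hm, rfl⟩ := Submodule.codisjoint_iff_exists_add_eq.mp hcompl.codisjoint x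
    exact ⟨⟨m, hm⟩, by simp [show f k = 0 from hk]⟩
  let e := ContinuousLinearEquiv.ofBijective (f.comp M.subtypeL) hinj hsurj
  exact ⟨M.subtypeL.comp e.symm.toContinuousLinearMap, e.apply_symm_apply⟩

end ContinuousLinearMap.HasRightInverse

namespace IsCompactOperator

variable {𝕜 X : Type*} [NontriviallyNormedField 𝕜] [NormedAddCommGroup X] [NormedSpace 𝕜 X]
  {T : X →L[𝕜] X} {μ : 𝕜}

theorem finiteDimensional_ker_smul_one_sub [CompleteSpace 𝕜] (hT : IsCompactOperator T)
    (hμ : μ ≠ 0) : FiniteDimensional 𝕜 (μ • 1 - T : X →L[𝕜] X).ker := by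
  set N := (μ • 1 - T : X →L[𝕜] X).ker
  have hTN : ∀ x ∈ N, T x = μ • x := fun x hx => by
    have : μ • x - T x = 0 := by simpa using LinearMap.mem_ker.mp hx
    exact (sub_eq_zero.mp this).symm
  have hmaps : ∀ x ∈ N, T x ∈ N := fun x hx => by simpa [hTN x hx] using N.smul_mem μ hx
  have hid : (id : N → N) = ⇑(μ⁻¹ • (T : X →ₗ[𝕜] X).restrict hmaps) := by
    ext x
    simp [hTN x x.2, smul_smul, inv_mul_cancel₀ hμ]
  apply FiniteDimensional.of_isCompactOperator_id
  rw [hid]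
  exact (hT.restrict hmaps (ContinuousLinearMap.isClosed_ker _)).smul μ⁻¹

variable [CompleteSpace X]

theorem bijective_smul_one_sub_of_injective (hT : IsCompactOperator T) (hμ : μ ≠ 0)
    (h : Injective (μ • 1 - T : X →L[𝕜] X)) : Bijective (μ • 1 - T : X →L[𝕜] X) := by
  have hnot : ¬ HasEigenvalue (T : End 𝕜 X) μ := fun hev => by
    obtain ⟨x, hx⟩ := hev.exists_hasEigenvector
    exact hx.2 (h (by simpa [sub_eq_zero] using hx.apply_eq_smul.symm))
  have hres := (hasEigenvalue_or_mem_resolventSet hT hμ).resolve_left hnot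
  rwa [spectrum.mem_resolventSet_iff, ContinuousLinearMap.isUnit_iff_bijective,
    Algebra.algebraMap_eq_smul_one] at hres

theorem injective_smul_one_sub_of_hasRightInverse (hT : IsCompactOperator T) (hμ : μ ≠ 0)
    (hS : (μ • 1 - T : X →L[𝕜] X).HasRightInverse) : Injective (μ • 1 - T : X →L[𝕜] X) := by
  set R := hS.rightInverse
  have hSR : ∀ y, (μ • 1 - T : X →L[𝕜] X) (R y) = y := hS.rightInverse_rightInverse
  have hR : (-μ⁻¹) • 1 - μ⁻¹ • (T ∘L R) = -R := by
    ext y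
    have hy : μ • R y - T (R y) = y := by simpa using hSR y
    simp only [neg_smul, sub_apply, neg_apply, smul_apply, one_apply_eq_self,
      ContinuousLinearMap.comp_apply]
    linear_combination (norm := match_scalars) μ⁻¹ • hy
    all_goals field_simp
    all_goals ring
  have hRinj : Injective (-R) := (neg_injective.comp hS.rightInverse_rightInverse.injective :)
  obtain ⟨-, hRsurj⟩ := ((hT.comp_clm R).smul μ⁻¹).bijective_smul_one_sub_of_injective
    (neg_ne_zero.2 (inv_ne_zero hμ)) (by rwa [hR])
  rw [hR] at hRsurj
  have hRsurj' : Surjective R := fun y => (hRsurj (-y)).imp fun _ hx => neg_injective hx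
  exact (hS.rightInverse_rightInverse.rightInverse_of_surjective hRsurj').injective

end IsCompactOperator

theorem compact_ker_bot_iff_range_top {𝕜 V : Type*} [RCLike 𝕜] [NormedAddCommGroup V]
    [NormedSpace 𝕜 V] [CompleteSpace V] (T : V →L[𝕜] V) (hT : IsCompactOperator T)
    (lam : 𝕜) (hlam : lam ≠ 0) :
    LinearMap.ker ((lam • ContinuousLinearMap.id 𝕜 V - T : V →L[𝕜] V) : V →ₗ[𝕜] V) = ⊥ ↔
      LinearMap.range ((lam • ContinuousLinearMap.id 𝕜 V - T : V →L[𝕜] V) : V →ₗ[𝕜] V) = ⊤ := by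
  have hS : lam • ContinuousLinearMap.id 𝕜 V - T = lam • 1 - T := rfl
  rw [LinearMap.ker_eq_bot, LinearMap.range_eq_top, ContinuousLinearMap.coe_coe, hS]
  have := hT.finiteDimensional_ker_smul_one_sub hlam
  exact ⟨fun hinj => (hT.bijective_smul_one_sub_of_injective hlam hinj).2,
    fun hsurj => hT.injective_smul_one_sub_of_hasRightInverse hlam
      (.of_surjective_of_closedComplemented_ker hsurj (.of_finiteDimensional _))⟩
end
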